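/- arXiv:math/0607473 — 9 statements merged into one kernel-verified Lean document; each statement's English description precedes it below -/
import Mathlib

section
/- If a and b are coprime positive integers, then L(ab) ≤ τ(b)·L(a), where L(n) is the measure of the union over divisors d of n of [log d - log 2, log d) and τ(b) is the number of divisors of b. -/
open MeasureTheory Real

noncomputable def Lset (n : ℕ) : Set ℝ :=
  ⋃ d ∈ n.divisors, Set.Ico (Real.log d - Real.log 2) (Real.log d)

noncomputable def Lm (n : ℕ) : ℝ := (volume (Lset n)).toReal

theorem stmt1 (a b : ℕ) (ha : 0 < a) (hb : 0 < b) (hab : Nat.Coprime a b) :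
    Lm (a * b) ≤ (b.divisors.card : ℝ) * Lm a := by
  have hsub : Lset (a * b) ⊆ ⋃ e ∈ b.divisors, (fun x => Real.log e + x) '' Lset a := by
    intro x hx
    simp only [Lset, Set.mem_iUnion, exists_prop] at hx ⊢
    obtain ⟨d', hd', hx⟩ := hx
    rw [Nat.divisors_mul, Finset.mem_mul] at hd'
    obtain ⟨d, hd, e, he, hde⟩ := hd'
    have hdpos : 0 < d := Nat.pos_of_mem_divisors hd
    have hepos : 0 < e := Nat.pos_of_mem_divisors he
    have hlog : Real.log d' = Real.log d + Real.log e := by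
      rw [← hde]
      push_cast
      rw [Real.log_mul (by exact_mod_cast hdpos.ne') (by exact_mod_cast hepos.ne')]
    refine ⟨e, he, x - Real.log e, ?_, by ring⟩
    simp only [Lset, Set.mem_iUnion, exists_prop]
    refine ⟨d, hd, ?_⟩
    obtain ⟨h1, h2⟩ := hx
    rw [hlog] at h1 h2
    constructor <;> simp at * <;> linarith
  have hmeas : ∀ e : ℕ, volume ((fun x => Real.log e + x) '' Lset a) = volume (Lset a) := by
    intro e
    rw [Set.image_add_left, measure_preimage_add]
  have hfin : volume (Lset a) < ⊤ := by
    refine lt_of_le_of_lt (measure_biUnion_finset_le _ _) (ENNReal.sum_lt_top.2 ?_)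
    intro d _
    simp [Real.volume_Ico]
  have key : volume (Lset (a * b)) ≤ (b.divisors.card : ENNReal) * volume (Lset a) := by
    refine (measure_mono hsub).trans ((measure_biUnion_finset_le _ _).trans ?_)
    simp [hmeas, Finset.sum_const, nsmul_eq_mul]
  have := ENNReal.toReal_mono (by
      refine ENNReal.mul_ne_top (by simp) hfin.ne) key
  rw [ENNReal.toReal_mul] at this
  simpa [Lm] using this
end

section
/- If p_1 < p_2 < ... < p_k are primes, then L(p_1 ⋯ p_k) ≤ min over 0 ≤ j ≤ k of 2^{k-j}·(log(p_1 ⋯ p_j) + log 2), where the empty product for j = 0 is 1. -/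
open MeasureTheory Real Finset

lemma card_divisors_mul_le (a b : ℕ) :
    (a * b).divisors.card ≤ a.divisors.card * b.divisors.card := by
  rcases eq_or_ne (a * b) 0 with h | h
  · simp [h]
  · calc (a * b).divisors.card
        ≤ ((a.divisors ×ˢ b.divisors).image fun q => q.1 * q.2).card := by
          apply Finset.card_le_card
          intro d hd
          rw [Nat.mem_divisors] at hd
          obtain ⟨a', b', ha', hb', rfl⟩ := exists_dvd_and_dvd_of_dvd_mul hd.1
          refine Finset.mem_image.2 ⟨(a', b'), Finset.mem_product.2
            ⟨Nat.mem_divisors.2 ⟨ha', left_ne_zero_of_mul h⟩,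
             Nat.mem_divisors.2 ⟨hb', right_ne_zero_of_mul h⟩⟩, rfl⟩
      _ ≤ (a.divisors ×ˢ b.divisors).card := Finset.card_image_le
      _ = a.divisors.card * b.divisors.card := Finset.card_product _ _

lemma card_divisors_prod_le {ι : Type*} (s : Finset ι) (f : ι → ℕ)
    (hf : ∀ i ∈ s, (f i).Prime) :
    (∏ i ∈ s, f i).divisors.card ≤ 2 ^ s.card := by
  induction s using Finset.cons_induction with
  | empty => simp
  | cons i s hi ih =>
    rw [Finset.prod_cons, Finset.card_cons, pow_succ, mul_comm (2 ^ s.card) 2]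
    calc (f i * ∏ x ∈ s, f x).divisors.card
        ≤ (f i).divisors.card * (∏ x ∈ s, f x).divisors.card :=
          card_divisors_mul_le _ _
      _ ≤ 2 * 2 ^ s.card := by
          have hprime := hf i (Finset.mem_cons_self _ _)
          have : (f i).divisors.card = 2 := by
            rw [hprime.divisors]
            exact Finset.card_pair hprime.one_lt.ne
          rw [this]
          exact Nat.mul_le_mul_left 2 (ih fun x hx => hf x (Finset.mem_cons_of_mem hx))

theorem stmt2 (k : ℕ) (p : Fin k → ℕ) (hp : ∀ i, (p i).Prime)
    (hmono : StrictMono p) :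
    ∀ j : ℕ, j ≤ k →
      Lm (∏ i : Fin k, p i) ≤
        (2 : ℝ) ^ (k - j) *
          (Real.log (∏ i ∈ Finset.univ.filter fun i : Fin k => (i : ℕ) < j, (p i : ℕ))
            + Real.log 2) := by
  intro j hj
  set P := ∏ i ∈ Finset.univ.filter fun i : Fin k => (i : ℕ) < j, p i with hPdef
  set Q := ∏ i ∈ Finset.univ.filter fun i : Fin k => ¬ (i : ℕ) < j, p i with hQdef
  have hPpos : 0 < P := Finset.prod_pos fun i _ => (hp i).pos
  have hQpos : 0 < Q := Finset.prod_pos fun i _ => (hp i).pos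
  have hN : (∏ i : Fin k, p i) = P * Q :=
    (Finset.prod_filter_mul_prod_filter_not _ _ _).symm
  have hlogP : 0 ≤ Real.log (P : ℝ) :=
    Real.log_nonneg (by exact_mod_cast hPpos)
  have hc : 0 ≤ Real.log (P : ℝ) + Real.log 2 :=
    add_nonneg hlogP (Real.log_nonneg one_le_two)
  -- the covering
  have hsub : Lset (P * Q) ⊆
      ⋃ b ∈ Q.divisors, Set.Ico (Real.log b - Real.log 2) (Real.log b + Real.log P) := by
    intro x hx
    simp only [Lset, Set.mem_iUnion, exists_prop] at hx ⊢
    obtain ⟨d, hd, hxd⟩ := hx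
    rw [Nat.mem_divisors] at hd
    obtain ⟨a, b, ha, hb, rfl⟩ := exists_dvd_and_dvd_of_dvd_mul hd.1
    have hapos : 0 < a := Nat.pos_of_dvd_of_pos ha hPpos
    have hbpos : 0 < b := Nat.pos_of_dvd_of_pos hb hQpos
    have hloga : 0 ≤ Real.log (a : ℝ) := Real.log_nonneg (by exact_mod_cast hapos)
    have hlogab : Real.log ((a * b : ℕ) : ℝ) = Real.log a + Real.log b := by
      push_cast
      exact Real.log_mul (by positivity) (by positivity)
    have hlogaP : Real.log (a : ℝ) ≤ Real.log (P : ℝ) :=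
      Real.log_le_log (by exact_mod_cast hapos)
        (by exact_mod_cast Nat.le_of_dvd hPpos ha)
    refine ⟨b, Nat.mem_divisors.2 ⟨hb, hQpos.ne'⟩, ?_, ?_⟩
    · have := hxd.1
      rw [hlogab] at this
      linarith
    · have := hxd.2
      rw [hlogab] at this
      linarith
  have hcardfilter : (Finset.univ.filter fun i : Fin k => ¬ (i : ℕ) < j).card = k - j := by
    have htot := Finset.card_filter_add_card_filter_not
      (s := (Finset.univ : Finset (Fin k))) (p := fun i : Fin k => (i : ℕ) < j)
    have hlt : (Finset.univ.filter fun i : Fin k => (i : ℕ) < j).card = j := by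
      rw [← Finset.card_range j]
      apply Finset.card_bij (fun (i : Fin k) _ => (i : ℕ))
      · intro a ha
        simpa using (Finset.mem_filter.1 ha).2
      · intro a _ b _ hab
        exact Fin.val_injective hab
      · intro b hb
        have hbj : b < j := Finset.mem_range.1 hb
        exact ⟨⟨b, lt_of_lt_of_le hbj hj⟩, by simp [hbj], rfl⟩
    rw [Finset.card_univ, Fintype.card_fin] at htot
    omega
  have hcard : Q.divisors.card ≤ 2 ^ (k - j) := by
    rw [← hcardfilter]
    exact card_divisors_prod_le _ _ fun i _ => hp i
  have hmeas : volume (Lset (P * Q)) ≤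
      ENNReal.ofReal ((2 : ℝ) ^ (k - j) * (Real.log (P : ℝ) + Real.log 2)) := by
    calc volume (Lset (P * Q))
        ≤ volume (⋃ b ∈ Q.divisors,
            Set.Ico (Real.log b - Real.log 2) (Real.log b + Real.log P)) :=
          measure_mono hsub
      _ ≤ ∑ b ∈ Q.divisors,
            volume (Set.Ico (Real.log b - Real.log 2) (Real.log b + Real.log P)) :=
          measure_biUnion_finset_le _ _
      _ = ∑ _b ∈ Q.divisors, ENNReal.ofReal (Real.log (P : ℝ) + Real.log 2) := by
          apply Finset.sum_congr rfl
          intro b _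
          rw [Real.volume_Ico]
          ring_nf
      _ = (Q.divisors.card : ENNReal) * ENNReal.ofReal (Real.log (P : ℝ) + Real.log 2) := by
          rw [Finset.sum_const, nsmul_eq_mul]
      _ ≤ ENNReal.ofReal ((2 : ℝ) ^ (k - j)) *
            ENNReal.ofReal (Real.log (P : ℝ) + Real.log 2) := by
          gcongr
          have h1 : ENNReal.ofReal ((2 : ℝ) ^ (k - j)) = ((2 ^ (k - j) : ℕ) : ENNReal) := by
            push_cast
            rw [ENNReal.ofReal_pow (by norm_num)]
            norm_num
          rw [h1]
          exact_mod_cast hcard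
      _ = ENNReal.ofReal ((2 : ℝ) ^ (k - j) * (Real.log (P : ℝ) + Real.log 2)) :=
          (ENNReal.ofReal_mul (by positivity)).symm
  rw [hN]
  have hcast : (∏ i ∈ Finset.univ.filter fun i : Fin k => (i : ℕ) < j, ((p i : ℕ) : ℝ))
      = ((P : ℕ) : ℝ) := by rw [hPdef]; push_cast; ring
  rw [hcast]
  exact ENNReal.toReal_le_of_le_ofReal (by positivity) hmeas
end

section
/- Let x_1, ..., x_k be nonnegative real numbers and η > 0. Define 𝓛(x; η) = ⋃_{ε ∈ {0,1}^k} ( -η + Σ_i ε_i x_i , Σ_i ε_i x_i ) and L(x; η) its Lebesgue measure. Then L(x; η) ≤ min over 0 ≤ j ≤ k of 2^{k-j}·(x_1 + ⋯ + x_j + η). -/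
open MeasureTheory Real Finset

theorem stmt3 (k : ℕ) (x : Fin k → ℝ) (hx : ∀ i, 0 ≤ x i) (η : ℝ) (hη : 0 < η) :
    ∀ j : ℕ, j ≤ k →
      (volume (⋃ ε : Fin k → Bool,
          Set.Ioo (-η + ∑ i : Fin k, if ε i then x i else 0)
                  (∑ i : Fin k, if ε i then x i else 0))).toReal ≤
        (2 : ℝ) ^ (k - j) *
          ((∑ i ∈ Finset.univ.filter fun i : Fin k => (i : ℕ) < j, x i) + η) := by
  intro j hj
  set A : ℝ := ∑ i ∈ Finset.univ.filter fun i : Fin k => (i : ℕ) < j, x i with hA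
  have hA0 : 0 ≤ A := Finset.sum_nonneg fun i _ => hx i
  have hcard : Fintype.card {i : Fin k // j ≤ (i : ℕ)} = k - j := by
    rw [Fintype.card_subtype]
    rcases Nat.lt_or_ge j k with h | h
    · have : (Finset.filter (fun x : Fin k => j ≤ ↑x) Finset.univ) = Finset.Ici (⟨j, h⟩ : Fin k) := by
        ext i; simp [Fin.le_def]
      rw [this, Fin.card_Ici]
    · have : (Finset.filter (fun x : Fin k => j ≤ ↑x) Finset.univ) = ∅ := by
        ext i; simp; omega
      rw [this]; simp; omega
  set b : ({i : Fin k // j ≤ (i : ℕ)} → Bool) → ℝ :=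
    fun ε => ∑ i : {i : Fin k // j ≤ (i : ℕ)}, if ε i then x i.1 else 0 with hb
  have hsub : (⋃ ε : Fin k → Bool,
      Set.Ioo (-η + ∑ i : Fin k, if ε i then x i else 0)
              (∑ i : Fin k, if ε i then x i else 0)) ⊆
      ⋃ ε' : {i : Fin k // j ≤ (i : ℕ)} → Bool, Set.Ioo (b ε' - η) (b ε' + A) := by
    intro t ht
    simp only [Set.mem_iUnion] at ht ⊢
    obtain ⟨ε, ht⟩ := ht
    refine ⟨fun i => ε i.1, ?_⟩
    have hsplit : (∑ i : Fin k, if ε i then x i else 0) =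
        (∑ i ∈ Finset.univ.filter fun i : Fin k => (i:ℕ) < j, if ε i then x i else 0) +
          b (fun i => ε i.1) := by
      rw [hb, ← Finset.sum_filter_add_sum_filter_not Finset.univ (fun i : Fin k => (i:ℕ) < j)]
      congr 1
      exact Finset.sum_subtype _ (by simp [not_lt]) _
    set a := ∑ i ∈ Finset.univ.filter fun i : Fin k => (i:ℕ) < j, if ε i then x i else 0 with ha
    have ha0 : 0 ≤ a := Finset.sum_nonneg fun i _ => by split; exacts [hx i, le_refl 0]
    have haA : a ≤ A := Finset.sum_le_sum fun i _ => by split; exacts [le_refl (x i), hx i]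
    obtain ⟨h1, h2⟩ := ht
    rw [hsplit] at h1 h2
    constructor <;> linarith
  have hmeas : volume (⋃ ε : Fin k → Bool,
      Set.Ioo (-η + ∑ i : Fin k, if ε i then x i else 0)
              (∑ i : Fin k, if ε i then x i else 0)) ≤
      (2 : ENNReal) ^ (k - j) * ENNReal.ofReal (A + η) := by
    calc _ ≤ volume (⋃ ε' : {i : Fin k // j ≤ (i : ℕ)} → Bool, Set.Ioo (b ε' - η) (b ε' + A)) :=
          measure_mono hsub
      _ ≤ ∑ ε' : {i : Fin k // j ≤ (i : ℕ)} → Bool, volume (Set.Ioo (b ε' - η) (b ε' + A)) :=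
          measure_iUnion_fintype_le _ _
      _ = ∑ ε' : {i : Fin k // j ≤ (i : ℕ)} → Bool, ENNReal.ofReal (A + η) := by
          simp only [Real.volume_Ioo]
          congr 1; ext ε'; congr 1; ring
      _ = (2 : ENNReal) ^ (k - j) * ENNReal.ofReal (A + η) := by
          rw [Finset.sum_const, Finset.card_univ, Fintype.card_fun, Fintype.card_bool, hcard,
            nsmul_eq_mul]
          norm_cast
  have hne : (2 : ENNReal) ^ (k - j) * ENNReal.ofReal (A + η) ≠ ⊤ :=
    ENNReal.mul_ne_top (by simp) ENNReal.ofReal_ne_top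
  have := ENNReal.toReal_mono hne hmeas
  refine this.trans ?_
  rw [ENNReal.toReal_mul, ENNReal.toReal_pow, ENNReal.toReal_ofReal (by positivity)]
  simp
end

section
/- For any finite set 𝔸 of positive integers, (Σ_{a∈𝔸} τ(a)/a)² ≤ 6·(Σ_{a∈𝔸} L(a)/a)·(Σ_{a∈𝔸} W(a)/a), where W(a) is the number of ordered pairs (d, d') of divisors of a with |log(d/d')| ≤ log 2. -/
/-!
Sort the divisors `d` of `a` into buckets according to `⌊log d / log 2⌋`. Divisors in the same
bucket are within `log 2` of each other, so the sum of the squared bucket sizes is at most `W(a)`,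
and by Cauchy–Schwarz `τ(a)² ≤ (number of buckets) · W(a)`. An occupied bucket `k` contributes an
interval of length `log 2` to the union defining `L(a)` inside `[(k - 1) log 2, (k + 1) log 2)`;
these windows are disjoint for buckets of equal parity, so `(number of buckets) · log 2 ≤ 2 L(a)`.
Hence `τ(a)² ≤ (2 / log 2) L(a) W(a) ≤ 6 L(a) W(a)`, and Cauchy–Schwarz over `a ∈ 𝔸` with the
weights `1 / a` finishes the proof.
-/

open MeasureTheory Real Finset

noncomputable def W (a : ℕ) : ℕ :=
  Set.ncard {p : ℕ × ℕ | p.1 ∣ a ∧ p.2 ∣ a ∧ |Real.log p.1 - Real.log p.2| ≤ Real.log 2}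

open scoped ENNReal

section Buckets

variable {ι : Type*} {c : ℝ}

noncomputable def bucket (c x : ℝ) : ℤ := ⌊x / c⌋

noncomputable def window (c : ℝ) (k : ℤ) : Set ℝ := Set.Ico ((k - 1) * c) ((k + 1) * c)

noncomputable def closePairs (s : Finset ι) (f : ι → ℝ) (c : ℝ) : Finset (ι × ι) :=
  (s ×ˢ s).filter fun p => |f p.1 - f p.2| ≤ c

lemma bucket_mul_le (hc : 0 < c) (x : ℝ) : bucket c x * c ≤ x :=
  (le_div_iff₀ hc).1 (Int.floor_le _)

lemma lt_bucket_add_one_mul (hc : 0 < c) (x : ℝ) : x < (bucket c x + 1) * c :=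
  (div_lt_iff₀ hc).1 (Int.lt_floor_add_one _)

lemma abs_sub_lt_of_bucket_eq (hc : 0 < c) {x y : ℝ} (h : bucket c x = bucket c y) :
    |x - y| < c := by
  have hx₁ := bucket_mul_le hc x
  have hx₂ := lt_bucket_add_one_mul hc x
  have hy₁ := bucket_mul_le hc y
  have hy₂ := lt_bucket_add_one_mul hc y
  rw [h] at hx₁ hx₂
  rw [abs_sub_lt_iff]
  constructor <;> linarith

lemma Ico_sub_subset_window (hc : 0 < c) (x : ℝ) : Set.Ico (x - c) x ⊆ window c (bucket c x) :=
  fun _ hy => ⟨by linarith [hy.1, bucket_mul_le hc x],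
    by linarith [hy.2, lt_bucket_add_one_mul hc x]⟩

lemma disjoint_window (hc : 0 < c) {k k' : ℤ} (h : k + 2 ≤ k' ∨ k' + 2 ≤ k) :
    Disjoint (window c k) (window c k') := by
  have aux : ∀ {k k' : ℤ}, k + 2 ≤ k' → Disjoint (window c k) (window c k') := by
    intro k k' h
    have h' : (k : ℝ) + 2 ≤ k' := by exact_mod_cast h
    refine Set.disjoint_left.2 fun x hx hx' => ?_
    nlinarith [hx.2, hx'.1]
  exact h.elim aux fun h => (aux h).symm

lemma volume_biUnion_Ico_ne_top (s : Finset ι) (f : ι → ℝ) :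
    volume (⋃ i ∈ s, Set.Ico (f i - c) (f i)) ≠ ⊤ :=
  ((measure_biUnion_finset_le s _).trans_lt
    (ENNReal.sum_lt_top.2 fun _ _ => by simp [Real.volume_Ico])).ne

lemma card_mul_le_volume_of_separated (hc : 0 < c) (s : Finset ι) (f : ι → ℝ) {K : Finset ℤ}
    (hK : K ⊆ s.image (bucket c ∘ f))
    (hsep : (K : Set ℤ).Pairwise fun k k' => k + 2 ≤ k' ∨ k' + 2 ≤ k) :
    (#K : ℝ) * c ≤ (volume (⋃ i ∈ s, Set.Ico (f i - c) (f i))).toReal := by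
  set U := ⋃ i ∈ s, Set.Ico (f i - c) (f i)
  have hmeet : ∀ k ∈ K, ENNReal.ofReal c ≤ volume (U ∩ window c k) := by
    intro k hk
    obtain ⟨i, hi, rfl⟩ := Finset.mem_image.1 (hK hk)
    calc ENNReal.ofReal c = volume (Set.Ico (f i - c) (f i)) := by simp [Real.volume_Ico]
      _ ≤ volume (U ∩ window c (bucket c (f i))) :=
        measure_mono fun x hx => ⟨Set.mem_biUnion hi hx, Ico_sub_subset_window hc _ hx⟩
  have hsum : (#K : ℝ≥0∞) * ENNReal.ofReal c ≤ volume U :=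
    calc (#K : ℝ≥0∞) * ENNReal.ofReal c = ∑ _k ∈ K, ENNReal.ofReal c := by simp
      _ ≤ ∑ k ∈ K, volume (U ∩ window c k) := Finset.sum_le_sum hmeet
      _ = volume (⋃ k ∈ K, U ∩ window c k) := by
        refine (measure_biUnion_finset (fun k hk k' hk' hne => ?_) fun k _ => ?_).symm
        · exact (disjoint_window hc (hsep hk hk' hne)).mono Set.inter_subset_right
            Set.inter_subset_right
        · exact (Finset.measurableSet_biUnion s fun _ _ => measurableSet_Ico).inter
            measurableSet_Ico
      _ ≤ volume U := measure_mono (Set.iUnion₂_subset fun _ _ => Set.inter_subset_left)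
  simpa [ENNReal.toReal_mul, hc.le] using
    ENNReal.toReal_mono (volume_biUnion_Ico_ne_top s f) hsum

lemma card_buckets_mul_le (hc : 0 < c) (s : Finset ι) (f : ι → ℝ) :
    (#(s.image (bucket c ∘ f)) : ℝ) * c ≤
      2 * (volume (⋃ i ∈ s, Set.Ico (f i - c) (f i))).toReal := by
  set K := s.image (bucket c ∘ f)
  have h₀ := card_mul_le_volume_of_separated hc s f (Finset.filter_subset (· % 2 = 0) K)
    fun k hk k' hk' _ => by simp only [Finset.coe_filter, Set.mem_ofPred_eq] at hk hk'; omega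
  have h₁ := card_mul_le_volume_of_separated hc s f (Finset.filter_subset (¬ · % 2 = 0) K)
    fun k hk k' hk' _ => by simp only [Finset.coe_filter, Set.mem_ofPred_eq] at hk hk'; omega
  rw [← Finset.card_filter_add_card_filter_not (· % 2 = 0), Nat.cast_add]
  linarith

lemma sq_card_le_card_buckets_mul_card_closePairs (hc : 0 < c) (s : Finset ι) (f : ι → ℝ) :
    #s ^ 2 ≤ #(s.image (bucket c ∘ f)) * #(closePairs s f c) := by
  classical
  set K := s.image (bucket c ∘ f)
  set fiber : ℤ → Finset ι := fun k => s.filter fun i => bucket c (f i) = k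
  have hsame : K.biUnion (fun k => fiber k ×ˢ fiber k) ⊆ closePairs s f c := by
    intro p hp
    simp only [fiber, Finset.mem_biUnion, Finset.mem_product, Finset.mem_filter] at hp
    obtain ⟨k, -, ⟨hp₁, rfl⟩, hp₂, hk⟩ := hp
    exact Finset.mem_filter.2 ⟨Finset.mem_product.2 ⟨hp₁, hp₂⟩,
      (abs_sub_lt_of_bucket_eq hc hk.symm).le⟩
  have hdisj : (K : Set ℤ).PairwiseDisjoint fun k => fiber k ×ˢ fiber k :=
    fun k _ k' _ hne => Finset.disjoint_product.2 <| Or.inl <|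
      Finset.disjoint_filter.2 fun _ _ hk hk' => hne (hk.symm.trans hk')
  calc #s ^ 2 = (∑ k ∈ K, #(fiber k)) ^ 2 := by
        rw [card_eq_sum_card_fiberwise fun i hi => mem_image_of_mem (bucket c ∘ f) hi]
        rfl
    _ ≤ #K * ∑ k ∈ K, #(fiber k) ^ 2 := sq_sum_le_card_mul_sum_sq
    _ = #K * #(K.biUnion fun k => fiber k ×ˢ fiber k) := by
        simp only [Finset.card_biUnion hdisj, Finset.card_product, sq]
    _ ≤ #K * #(closePairs s f c) := Nat.mul_le_mul_left _ (Finset.card_le_card hsame)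

theorem sq_card_mul_le_two_mul_volume_mul_card_closePairs (hc : 0 < c) (s : Finset ι)
    (f : ι → ℝ) :
    (#s : ℝ) ^ 2 * c ≤
      2 * (volume (⋃ i ∈ s, Set.Ico (f i - c) (f i))).toReal * #(closePairs s f c) := by
  have hcomb : (#s : ℝ) ^ 2 ≤ #(s.image (bucket c ∘ f)) * #(closePairs s f c) := by
    exact_mod_cast sq_card_le_card_buckets_mul_card_closePairs hc s f
  calc (#s : ℝ) ^ 2 * c ≤ #(s.image (bucket c ∘ f)) * c * #(closePairs s f c) := by
        nlinarith
    _ ≤ _ := by gcongr ?_ * _; exact card_buckets_mul_le hc s f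

end Buckets

lemma W_eq_card_closePairs {a : ℕ} (ha : a ≠ 0) :
    W a = #(closePairs a.divisors (fun d => Real.log d) (Real.log 2)) := by
  rw [W, ← Set.ncard_coe_finset, closePairs, Finset.coe_filter]
  congr 1
  ext p
  simp [ha, and_assoc]

lemma Lm_nonneg (a : ℕ) : 0 ≤ Lm a := ENNReal.toReal_nonneg

lemma sq_card_divisors_le (a : ℕ) : (#a.divisors : ℝ) ^ 2 ≤ 6 * Lm a * W a := by
  rcases eq_or_ne a 0 with rfl | ha
  · simpa using mul_nonneg (mul_nonneg (by norm_num : (0 : ℝ) ≤ 6) (Lm_nonneg 0))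
      (W 0).cast_nonneg
  have key : (#a.divisors : ℝ) ^ 2 * Real.log 2 ≤ 2 * Lm a * W a := by
    rw [W_eq_card_closePairs ha]
    exact sq_card_mul_le_two_mul_volume_mul_card_closePairs (Real.log_pos one_lt_two) _ _
  have hLW : 0 ≤ Lm a * W a := mul_nonneg (Lm_nonneg a) (Nat.cast_nonneg _)
  nlinarith [Real.log_two_gt_d9]

theorem stmt4_general (A : Finset ℕ) :
    (∑ a ∈ A, (a.divisors.card : ℝ) / a) ^ 2 ≤
      6 * (∑ a ∈ A, Lm a / a) * (∑ a ∈ A, (W a : ℝ) / a) := by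
  rw [mul_comm 6, mul_assoc, Finset.mul_sum]
  refine Finset.sum_sq_le_sum_mul_sum_of_sq_le_mul A
    (fun a _ => div_nonneg (Lm_nonneg a) a.cast_nonneg) (fun a _ => by positivity) fun a _ => ?_
  rw [div_pow, mul_div_assoc', div_mul_div_comm, ← sq, mul_left_comm, ← mul_assoc]
  gcongr
  exact sq_card_divisors_le a

theorem stmt4 (A : Finset ℕ) (hA : ∀ a ∈ A, 0 < a) :
    (∑ a ∈ A, (a.divisors.card : ℝ) / a) ^ 2 ≤
      6 * (∑ a ∈ A, Lm a / a) * (∑ a ∈ A, (W a : ℝ) / a) :=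
  stmt4_general A
end

section
/- Let x_1, ..., x_r be positive reals with product X, and extend indices cyclically by x_{r+i} = x_i. Then Σ_{j=0}^{r-1} ( Σ_{h=1}^{r} x_{1+j}·x_{2+j}·⋯·x_{h+j} )^{-1} lies in the interval [1/max(1, X), 1/min(1, X)]. -/
open Finset

theorem stmt8 (r : ℕ) (hr : 1 ≤ r) (x : ℕ → ℝ)
    (hpos : ∀ i, 0 < x i)
    (hper : ∀ i, x (i + r) = x i)
    (X : ℝ) (hX : X = ∏ i ∈ Finset.Icc 1 r, x i) :
    (∑ j ∈ Finset.range r, (∑ h ∈ Finset.Icc 1 r, ∏ i ∈ Finset.Icc 1 h, x (i + j))⁻¹) ∈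
      Set.Icc (1 / max 1 X) (1 / min 1 X) := by
  classical
  set P : ℕ → ℝ := fun n => ∏ i ∈ Finset.Ioc 0 n, x i with hPdef
  have hPpos : ∀ n, 0 < P n := fun n => Finset.prod_pos fun i _ => hpos i
  have hIccIoc : ∀ n : ℕ, Finset.Icc 1 n = Finset.Ioc 0 n := fun n => rfl
  have hXP : X = P r := by rw [hX, hIccIoc]
  have hXpos : 0 < X := hXP ▸ hPpos r
  have hshift : ∀ j h : ℕ, ∏ i ∈ Finset.Ioc 0 h, x (i + j) = P (j + h) / P j := by
    intro j h
    have h1 : ∏ i ∈ Finset.Ioc 0 h, x (i + j) = ∏ i ∈ Finset.Ioc j (j + h), x i := by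
      have hm := Finset.map_add_right_Ioc 0 h j
      rw [zero_add, add_comm h j] at hm
      rw [← hm, Finset.prod_map]
      rfl
    have h2 : P j * ∏ i ∈ Finset.Ioc j (j + h), x i = P (j + h) :=
      Finset.prod_Ioc_consecutive _ (Nat.zero_le j) (Nat.le_add_right j h)
    rw [h1, ← h2, mul_comm, mul_div_assoc, div_self (hPpos j).ne', mul_one]
  have hPper : ∀ k : ℕ, P (r + k) = X * P k := by
    intro k
    have h1 : ∏ i ∈ Finset.Ioc 0 k, x (i + r) = P (r + k) / P r := hshift r k
    have h2 : ∏ i ∈ Finset.Ioc 0 k, x (i + r) = P k := by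
      refine Finset.prod_congr rfl fun i _ => hper i
    rw [h2] at h1
    rw [hXP]
    have := hPpos r
    field_simp at h1
    linarith [h1]
  set T : ℕ → ℝ := fun n => ∑ k ∈ Finset.range n, P k with hTdef
  have hTadd : ∀ m n : ℕ, T (m + n) = T m + ∑ k ∈ Finset.range n, P (m + k) := by
    intro m n
    simp [hTdef, Finset.sum_range_add]
  have hTper : ∀ n : ℕ, T (r + n) = T r + X * T n := by
    intro n
    rw [hTadd r n]
    congr 1
    rw [hTdef, Finset.mul_sum]
    exact Finset.sum_congr rfl fun k _ => hPper k
  have hsum : ∀ j : ℕ, ∑ h ∈ Finset.Icc 1 r, P (j + h) = T r + (X - 1) * T (j + 1) := by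
    intro j
    have h1 : ∑ h ∈ Finset.Icc 1 r, P (j + h) = ∑ k ∈ Finset.range r, P ((j + 1) + k) := by
      rw [← Finset.Ico_add_one_right_eq_Icc, Finset.sum_Ico_eq_sum_range]
      exact Finset.sum_congr (by norm_num) fun k _ => by rw [← add_assoc]
    have h2 := hTadd (j + 1) r
    have h3 : T ((j + 1) + r) = T r + X * T (j + 1) := by
      rw [add_comm (j + 1) r]; exact hTper (j + 1)
    rw [h1]
    have : ∑ k ∈ Finset.range r, P ((j + 1) + k) = T ((j+1) + r) - T (j + 1) := by
      rw [h2]; ring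
    rw [this, h3]; ring
  have hTnonneg : ∀ n, 0 ≤ T n := fun n =>
    Finset.sum_nonneg fun k _ => (hPpos k).le
  have hTmono : ∀ {a b : ℕ}, a ≤ b → T a ≤ T b := by
    intro a b hab
    exact Finset.sum_le_sum_of_subset_of_nonneg (Finset.range_subset_range.2 hab)
      (fun k _ _ => (hPpos k).le)
  have hTrpos : 0 < T r := by
    have : T 1 ≤ T r := hTmono hr
    have h1 : T 1 = P 0 := by simp [hTdef]
    nlinarith [hPpos 0]
  -- denominator bounds
  have hDb : ∀ j : ℕ, j < r → min 1 X * T r ≤ T r + (X - 1) * T (j + 1) ∧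
      T r + (X - 1) * T (j + 1) ≤ max 1 X * T r := by
    intro j hj
    have h0 : 0 ≤ T (j + 1) := hTnonneg _
    have h1 : T (j + 1) ≤ T r := hTmono hj
    rcases le_total 1 X with h | h
    · rw [min_eq_left h, max_eq_right h]
      constructor <;> nlinarith
    · rw [min_eq_right h, max_eq_left h]
      constructor <;> nlinarith
  have hS : ∀ j : ℕ, (∑ h ∈ Finset.Icc 1 r, ∏ i ∈ Finset.Icc 1 h, x (i + j))⁻¹
      = P j / (T r + (X - 1) * T (j + 1)) := by
    intro j
    have h1 : ∑ h ∈ Finset.Icc 1 r, ∏ i ∈ Finset.Icc 1 h, x (i + j)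
        = (T r + (X - 1) * T (j + 1)) / P j := by
      rw [← hsum j, Finset.sum_div]
      refine Finset.sum_congr rfl fun h _ => ?_
      rw [hIccIoc, hshift j h]
    rw [h1, inv_div]
  have hsum_eq : (∑ j ∈ Finset.range r, (∑ h ∈ Finset.Icc 1 r, ∏ i ∈ Finset.Icc 1 h, x (i + j))⁻¹)
      = ∑ j ∈ Finset.range r, P j / (T r + (X - 1) * T (j + 1)) :=
    Finset.sum_congr rfl fun j _ => hS j
  have hminpos : 0 < min 1 X := lt_min one_pos hXpos
  have hmaxpos : 0 < max 1 X := lt_of_lt_of_le one_pos (le_max_left 1 X)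
  have hsumP : ∑ j ∈ Finset.range r, P j = T r := rfl
  rw [Set.mem_Icc, hsum_eq]
  have key : ∀ c : ℝ, 0 < c → ∑ j ∈ Finset.range r, P j / (c * T r) = 1 / c := by
    intro c hc
    rw [← Finset.sum_div, hsumP, mul_comm, ← div_div, div_self hTrpos.ne']
  constructor
  · rw [← key (max 1 X) hmaxpos]
    refine Finset.sum_le_sum fun j hj => ?_
    have hd := hDb j (Finset.mem_range.1 hj)
    have hdpos : 0 < T r + (X - 1) * T (j + 1) :=
      lt_of_lt_of_le (by positivity) hd.1
    rw [div_le_div_iff₀ (by positivity) hdpos]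
    nlinarith [(hPpos j).le, hd.2]
  · rw [← key (min 1 X) hminpos]
    refine Finset.sum_le_sum fun j hj => ?_
    have hd := hDb j (Finset.mem_range.1 hj)
    have hdpos : 0 < T r + (X - 1) * T (j + 1) :=
      lt_of_lt_of_le (by positivity) hd.1
    rw [div_le_div_iff₀ hdpos (by positivity)]
    nlinarith [(hPpos j).le, hd.1]
end

section
/- Let x_1, ..., x_r be positive reals with x_1·⋯·x_r = 1, extended cyclically. Then Σ_{j=0}^{r-1} ( Σ_{h=1}^{r} x_{1+j}⋯x_{h+j} )^{-1} = 1. -/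
open Finset

theorem stmt9 (r : ℕ) (hr : 1 ≤ r) (x : ℕ → ℝ)
    (hpos : ∀ i, 0 < x i)
    (hper : ∀ i, x (i + r) = x i)
    (hX : ∏ i ∈ Finset.Icc 1 r, x i = 1) :
    (∑ j ∈ Finset.range r, (∑ h ∈ Finset.Icc 1 r, ∏ i ∈ Finset.Icc 1 h, x (i + j))⁻¹) = 1 := by
  set P : ℕ → ℝ := fun n => ∏ i ∈ Finset.Ioc 0 n, x i with hPdef
  have hPpos : ∀ n, 0 < P n := fun n => Finset.prod_pos (fun i _ => hpos i)
  have hP0 : P 0 = 1 := by simp [hPdef]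
  -- product over any window of length r is 1
  have key : ∀ n, (∏ i ∈ Finset.Ioc n (n + r), x i) = 1 := by
    intro n
    induction n with
    | zero => simpa [← Finset.Icc_add_one_left_eq_Ioc] using hX
    | succ n ih =>
      have h1 : ∏ i ∈ Finset.Ioc n (n + r + 1), x i
          = (∏ i ∈ Finset.Ioc n (n + r), x i) * x (n + r + 1) :=
        Finset.prod_Ioc_succ_top (by omega) x
      have h2 : ∏ i ∈ Finset.Ioc n (n + r + 1), x i
          = x (n + 1) * ∏ i ∈ Finset.Ioc (n + 1) (n + r + 1), x i := by
        rw [← Finset.prod_Ioc_consecutive x (show n ≤ n + 1 by omega) (by omega)]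
        congr 1
        simp
      have hx : x (n + r + 1) = x (n + 1) := by
        rw [show n + r + 1 = (n + 1) + r by ring, hper]
      have hxne : x (n + 1) ≠ 0 := (hpos _).ne'
      have := h1.symm.trans h2
      rw [ih, one_mul, hx] at this
      have : x (n + 1) * ∏ i ∈ Finset.Ioc (n + 1) (n + r + 1), x i
          = x (n + 1) * 1 := by rw [mul_one, ← this]
      have := mul_left_cancel₀ hxne this
      simpa [show n + 1 + r = n + r + 1 by ring] using this
  -- P is periodic with period r
  have hPper : ∀ n, P (n + r) = P n := by
    intro n
    rw [hPdef]
    simp only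
    rw [← Finset.prod_Ioc_consecutive x (Nat.zero_le n) (by omega), key n, mul_one]
  -- sums of P over windows of length r are constant
  have Tconst : ∀ j, ∑ k ∈ Finset.Ioc j (j + r), P k = ∑ k ∈ Finset.Ioc 0 r, P k := by
    intro j
    induction j with
    | zero => simp
    | succ j ih =>
      have h1 : ∑ k ∈ Finset.Ioc j (j + r + 1), P k
          = (∑ k ∈ Finset.Ioc j (j + r), P k) + P (j + r + 1) :=
        Finset.sum_Ioc_succ_top (by omega) P
      have h2 : ∑ k ∈ Finset.Ioc j (j + r + 1), P k
          = P (j + 1) + ∑ k ∈ Finset.Ioc (j + 1) (j + r + 1), P k := by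
        rw [← Finset.sum_Ioc_consecutive P (show j ≤ j + 1 by omega) (by omega)]
        congr 1
        simp
      have hx : P (j + r + 1) = P (j + 1) := by
        rw [show j + r + 1 = (j + 1) + r by ring, hPper]
      have := h1.symm.trans h2
      rw [hx] at this
      have h3 : ∑ k ∈ Finset.Ioc (j + 1) (j + r + 1), P k
          = ∑ k ∈ Finset.Ioc j (j + r), P k := by linarith
      rw [show j + 1 + r = j + r + 1 by ring, h3, ih]
  set S : ℝ := ∑ k ∈ Finset.Ioc 0 r, P k with hS
  have hSpos : 0 < S := Finset.sum_pos (fun k _ => hPpos k) (by simp [hr] ; omega)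
  -- inner products as quotients of P
  have hprod : ∀ j h, (∏ i ∈ Finset.Icc 1 h, x (i + j)) = P (j + h) / P j := by
    intro j h
    have hre : (∏ i ∈ Finset.Icc 1 h, x (i + j)) = ∏ i ∈ Finset.Ioc j (j + h), x i := by
      have hm := Finset.map_add_left_Ioc 0 h j
      simp only [Nat.add_zero] at hm
      rw [← hm, Finset.prod_map, ← Finset.Icc_add_one_left_eq_Ioc]
      apply Finset.prod_congr rfl
      intro i _
      simp [addLeftEmbedding, add_comm]
    rw [hre, eq_div_iff (hPpos j).ne', mul_comm]
    exact Finset.prod_Ioc_consecutive x (Nat.zero_le j) (by omega)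
  have hinner : ∀ j, (∑ h ∈ Finset.Icc 1 r, ∏ i ∈ Finset.Icc 1 h, x (i + j)) = S / P j := by
    intro j
    rw [← Tconst j]
    rw [show (∑ k ∈ Finset.Ioc j (j + r), P k) = ∑ h ∈ Finset.Icc 1 r, P (j + h) by
      have hm := Finset.map_add_left_Ioc 0 r j
      simp only [Nat.add_zero] at hm
      rw [← hm, Finset.sum_map, ← Finset.Icc_add_one_left_eq_Ioc]
      apply Finset.sum_congr rfl
      intro i _
      simp [addLeftEmbedding]]
    rw [Finset.sum_div]
    apply Finset.sum_congr rfl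
    intro h _
    exact hprod j h
  calc (∑ j ∈ Finset.range r, (∑ h ∈ Finset.Icc 1 r, ∏ i ∈ Finset.Icc 1 h, x (i + j))⁻¹)
      = ∑ j ∈ Finset.range r, P j / S := by
        apply Finset.sum_congr rfl
        intro j _
        rw [hinner j, inv_div]
    _ = (∑ j ∈ Finset.range r, P j) / S := by rw [Finset.sum_div]
    _ = 1 := by
        have hsum : (∑ j ∈ Finset.range r, P j) = S := by
          have hPr : P r = 1 := by
            have := hPper 0
            rwa [zero_add, hP0] at this
          obtain ⟨r', rfl⟩ : ∃ r', r = r' + 1 := ⟨r - 1, by omega⟩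
          have e1 : ∑ j ∈ Finset.range (r' + 1), P j = P 0 + ∑ j ∈ Finset.Ioc 0 r', P j := by
            rw [show Finset.range (r' + 1) = insert 0 (Finset.Ioc 0 r') by
              ext i; simp [Finset.mem_range, Finset.mem_Ioc]]
            rw [Finset.sum_insert (by simp)]
          rw [e1, hP0, hS, Finset.sum_Ioc_succ_top (Nat.zero_le r') P, hPr]
          ring
        rw [hsum, div_self hSpos.ne']
end

section
/- Abel's identity: For integers t ≥ 1 and nonzero reals a, b, Σ_{j=0}^{t} C(t, j)·(a + j)^{j-1}·(b + t - j)^{t-j-1} = (1/a + 1/b)·(t + a + b)^{t-1}. -/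
/-!
The Abel polynomials `A₀ = 1`, `Aₙ = X (X + n)^(n-1)` satisfy `Aₙ₊₁' = (n + 1) Aₙ(X + 1)`.
A sequence of polynomials with this derivative recursion is determined by its first term and its
values at `0`. Both `Aₙ(X + y)` and `∑_{i+j=n} C(n,i) Aⱼ(y) Aᵢ` satisfy it (the latter by
`C(n+1,i+1) (i+1) = (n+1) C(n,i)`) and agree at `0`, so `Aₙ(x + y) = ∑_{i+j=n} C(n,i) Aᵢ(x) Aⱼ(y)`.
Multiplied by `ab`, Abel's identity is this one at `x = a`, `y = b`, because
`c (c + j)^(j-1) = Aⱼ(c)` for `c ≠ 0`, also when `j = 0`.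
-/

open Finset

namespace Polynomial

section CommRing

variable {R : Type*} [CommRing R]

noncomputable def abel : ℕ → R[X]
  | 0 => 1
  | n + 1 => X * (X + C ((n : R) + 1)) ^ n

@[simp]
theorem abel_zero : (abel 0 : R[X]) = 1 := rfl

theorem abel_succ_eval (n : ℕ) (x : R) : (abel (n + 1)).eval x = x * (x + (n + 1)) ^ n := by
  simp [abel]

theorem abel_eval_zero (n : ℕ) : (abel n).eval (0 : R) = if n = 0 then 1 else 0 := by
  cases n <;> simp [abel]

theorem derivative_abel_succ (n : ℕ) :
    derivative (abel (n + 1) : R[X]) = C ((n : R) + 1) * (abel n).comp (X + 1) := by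
  cases n with
  | zero => simp [abel]
  | succ n =>
    rw [abel, abel, derivative_mul, derivative_X, derivative_X_add_C_pow]
    simp only [mul_comp, X_comp, pow_comp, add_comp, C_comp, one_comp, C_add, C_1, Nat.cast_add,
      Nat.cast_one, Nat.add_sub_cancel]
    ring

section IsAddTorsionFree

variable [IsAddTorsionFree R]

theorem eq_of_derivative_eq_of_eval_zero_eq {p q : R[X]} (hd : derivative p = derivative q)
    (h0 : p.eval 0 = q.eval 0) : p = q := by
  have hC := eq_C_of_derivative_eq_zero (p := p - q) (by rw [derivative_sub, hd, sub_self])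
  rwa [coeff_zero_eq_eval_zero, eval_sub, h0, sub_self, C_0, sub_eq_zero] at hC

theorem eq_of_derivative_succ_eq_C_mul_comp {p q : ℕ → R[X]} (h0 : p 0 = q 0)
    (hp : ∀ n, derivative (p (n + 1)) = C ((n : R) + 1) * (p n).comp (X + 1))
    (hq : ∀ n, derivative (q (n + 1)) = C ((n : R) + 1) * (q n).comp (X + 1))
    (heval : ∀ n, (p n).eval 0 = (q n).eval 0) : p = q := by
  funext n
  induction n with
  | zero => exact h0
  | succ n ih => exact eq_of_derivative_eq_of_eval_zero_eq (by rw [hp, hq, ih]) (heval _)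

theorem abel_comp_X_add_C (n : ℕ) (y : R) :
    (abel n).comp (X + C y) =
      ∑ ij ∈ antidiagonal n, C (n.choose ij.1 * (abel ij.2).eval y) * abel ij.1 := by
  suffices h : (fun n ↦ (abel n).comp (X + C y)) =
      fun n ↦ ∑ ij ∈ antidiagonal n, C (n.choose ij.1 * (abel ij.2).eval y) * abel ij.1 from
    congrFun h n
  refine eq_of_derivative_succ_eq_C_mul_comp ?_ (fun n ↦ ?_) (fun n ↦ ?_) (fun n ↦ ?_)
  · simp
  · rw [derivative_comp, derivative_abel_succ, derivative_X_add_C, one_mul, mul_comp, C_comp,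
      comp_assoc, comp_assoc]
    congr 2
    simp only [add_comp, X_comp, C_comp, one_comp]
    ring
  · rw [Nat.sum_antidiagonal_succ, derivative_add, derivative_sum]
    simp only [derivative_C_mul, abel_zero, derivative_one, mul_zero, zero_add,
      derivative_abel_succ, sum_comp, mul_comp, C_comp, mul_sum]
    refine sum_congr rfl fun ij _ ↦ ?_
    rw [← mul_assoc, ← mul_assoc, ← C_mul, ← C_mul]
    congr 2
    have h := congrArg (Nat.cast (R := R)) (Nat.add_one_mul_choose_eq n ij.1)
    push_cast at h
    linear_combination -(abel ij.2).eval y * h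
  · simp [eval_finsetSum, Nat.sum_antidiagonal_eq_sum_range_succ_mk, abel_eval_zero]

theorem abel_add_eval (n : ℕ) (x y : R) :
    (abel n).eval (x + y) =
      ∑ ij ∈ antidiagonal n, n.choose ij.1 * (abel ij.1).eval x * (abel ij.2).eval y := by
  simpa [eval_comp, eval_finsetSum, mul_right_comm] using congrArg (eval x) (abel_comp_X_add_C n y)

end IsAddTorsionFree

end CommRing

theorem abel_eval_eq_mul_zpow {K : Type*} [Field K] {n : ℕ} {x : K} (h : n ≠ 0 ∨ x ≠ 0) :
    (abel n).eval x = x * (x + n) ^ ((n : ℤ) - 1) := by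
  cases n with
  | zero => simp [mul_inv_cancel₀ (h.resolve_left (by simp))]
  | succ n => simp [abel_succ_eval]

end Polynomial

theorem stmt10 (t : ℕ) (ht : 1 ≤ t) (a b : ℝ) (ha : a ≠ 0) (hb : b ≠ 0) :
    ∑ j ∈ Finset.range (t + 1),
        (t.choose j : ℝ) * (a + j) ^ ((j : ℤ) - 1) * (b + t - j) ^ ((t : ℤ) - j - 1) =
      (1 / a + 1 / b) * (t + a + b) ^ ((t : ℤ) - 1) := by
  have hrhs : (1 / a + 1 / b) * (t + a + b) ^ ((t : ℤ) - 1) =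
      (Polynomial.abel t).eval (a + b) / (a * b) := by
    rw [Polynomial.abel_eval_eq_mul_zpow (Or.inl (by omega)), show a + b + t = t + a + b by ring]
    field_simp
    ring
  rw [hrhs, Polynomial.abel_add_eval, Nat.sum_antidiagonal_eq_sum_range_succ_mk, sum_div]
  refine sum_congr rfl fun j hj ↦ ?_
  have hjt : j ≤ t := Nat.lt_succ_iff.mp (mem_range.mp hj)
  rw [Polynomial.abel_eval_eq_mul_zpow (Or.inr ha), Polynomial.abel_eval_eq_mul_zpow (Or.inr hb),
    Nat.cast_sub hjt, Nat.cast_sub hjt, ← add_sub_assoc]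
  field_simp
end

section
/- If t ≥ 2 is an integer, b ≥ 0, and t + a + b > 0 with a, b real, then Σ over 1 ≤ j ≤ t−1 with j + a > 0 of C(t, j)·(a + j)^{j−1}·(b + t − j)^{t−j−1} ≤ e⁴·(t + a + b)^{t−1}. -/
/-!
Put `x = a + j`, `y = b + t - j`, so that `x + y = t + a + b` and `y ≥ t - j`. Spending the factor
`t - j` on one more power of `y` and using `j * C(t, j) = t * C(t - 1, j - 1)`, the `j`-th term is at
most `t / (j (t - j))` times a term `C(p + q, p) x^p y^q` of the binomial expansion of `(x + y)^(t-1)`.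
Weighted AM-GM together with Stirling's bounds on factorials shows that such a term is at most
`(p^(-1/2) + q^(-1/2)) (x + y)^(p+q)`, a square root better than the trivial bound. This makes the
`j`-th term at most `4 (j^(-3/2) + (t-j)^(-3/2)) (t + a + b)^(t-1)`, and since `∑ i^(-3/2) ≤ 3`
(telescoping against `2 / √i`) the whole sum is at most `24 (t + a + b)^(t-1) ≤ e⁴ (t + a + b)^(t-1)`.
-/

open Real Nat Finset

theorem factorial_le_exp_one_mul_sqrt_mul_pow {n : ℕ} (hn : n ≠ 0) :
    (n ! : ℝ) ≤ exp 1 * √n * (n / exp 1) ^ n := by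
  obtain ⟨k, rfl⟩ := Nat.exists_eq_succ_of_ne_zero hn
  -- the Stirling sequence decreases from its value `e / √2` at `1`
  have hseq : Stirling.stirlingSeq (k + 1) ≤ exp 1 / √2 := by
    simpa using Stirling.stirlingSeq'_antitone (Nat.zero_le k)
  rw [Stirling.stirlingSeq, div_le_iff₀ (by positivity)] at hseq
  calc ((k + 1 : ℕ) ! : ℝ) ≤ exp 1 / √2 * (√(2 * (k + 1 : ℕ)) * ((k + 1 : ℕ) / exp 1) ^ (k + 1)) :=
        hseq
    _ = _ := by rw [Real.sqrt_mul zero_le_two]; field_simp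

theorem choose_mul_pow_mul_pow_mul_sqrt_le (m n : ℕ) :
    ((m + n).choose m : ℝ) * m ^ m * n ^ n * √(m * n) ≤ √(m + n) * (m + n) ^ (m + n) := by
  rcases eq_or_ne m 0 with rfl | hm
  · simp only [Nat.cast_zero, zero_mul, Real.sqrt_zero, mul_zero]; positivity
  rcases eq_or_ne n 0 with rfl | hn
  · simp only [Nat.cast_zero, mul_zero, Real.sqrt_zero]; positivity
  have hfac : ((m + n).choose m : ℝ) * m ! * n ! = (m + n)! := by
    rw [add_comm m n, mul_right_comm]
    exact_mod_cast Nat.add_choose_mul_factorial_mul_factorial n m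
  have hexp : exp 1 ≤ 2 * π := by linarith [exp_one_lt_d9, pi_gt_three]
  refine le_of_mul_le_mul_right ?_ (by positivity : 0 < 2 * π / exp 1 ^ (m + n))
  calc ((m + n).choose m : ℝ) * m ^ m * n ^ n * √(m * n) * (2 * π / exp 1 ^ (m + n))
      = (m + n).choose m * (√(2 * π * m) * (m / exp 1) ^ m) * (√(2 * π * n) * (n / exp 1) ^ n) := by
        rw [Real.sqrt_mul (x := 2 * π) (by positivity), Real.sqrt_mul (x := 2 * π) (by positivity),
          Real.sqrt_mul (Nat.cast_nonneg m), div_pow, div_pow, pow_add]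
        field_simp
        rw [Real.sq_sqrt (by positivity)]
        ring
    _ ≤ (m + n).choose m * m ! * n ! := by
        gcongr <;> exact Stirling.le_factorial_stirling _
    _ ≤ exp 1 * √(m + n) * ((m + n) / exp 1) ^ (m + n) := by
        rw [hfac]; exact_mod_cast factorial_le_exp_one_mul_sqrt_mul_pow (by omega)
    _ = √(m + n) * (m + n) ^ (m + n) * (exp 1 / exp 1 ^ (m + n)) := by rw [div_pow]; ring
    _ ≤ √(m + n) * (m + n) ^ (m + n) * (2 * π / exp 1 ^ (m + n)) := by gcongr

theorem add_pow_add_mul_pow_mul_pow_le (m n : ℕ) {x y : ℝ} (hx : 0 ≤ x) (hy : 0 ≤ y) :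
    ((m : ℝ) + n) ^ (m + n) * (x ^ m * y ^ n) ≤ m ^ m * n ^ n * (x + y) ^ (m + n) := by
  rcases eq_or_ne m 0 with rfl | hm
  · simpa using mul_le_mul_of_nonneg_left (pow_le_pow_left₀ hy (le_add_of_nonneg_left hx) n)
      (by positivity : (0 : ℝ) ≤ n ^ n)
  rcases eq_or_ne n 0 with rfl | hn
  · simpa using mul_le_mul_of_nonneg_left (pow_le_pow_left₀ hx (le_add_of_nonneg_right hy) m)
      (by positivity : (0 : ℝ) ≤ m ^ m)
  set N : ℝ := m + n with hNdef
  have hN : 0 < N := by positivity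
  have hp₁ : 0 ≤ N * x / m := by positivity
  have hp₂ : 0 ≤ N * y / n := by positivity
  have hamgm := Real.geom_mean_le_arith_mean2_weighted (w₁ := m / N) (w₂ := n / N)
    (by positivity) (by positivity) hp₁ hp₂ (by rw [← add_div, div_self hN.ne'])
  have hmean : m / N * (N * x / m) + n / N * (N * y / n) = x + y := by field_simp
  have hpow : ((N * x / m) ^ (m / N) * (N * y / n) ^ (n / N)) ^ (m + n) =
      (N * x / m) ^ m * (N * y / n) ^ n := by
    rw [mul_pow, ← Real.rpow_mul_natCast hp₁, ← Real.rpow_mul_natCast hp₂]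
    push_cast
    rw [← hNdef, div_mul_cancel₀ _ hN.ne', div_mul_cancel₀ _ hN.ne', rpow_natCast, rpow_natCast]
  calc N ^ (m + n) * (x ^ m * y ^ n)
      = m ^ m * n ^ n * ((N * x / m) ^ m * (N * y / n) ^ n) := by
        rw [div_pow, div_pow, mul_pow, mul_pow, pow_add]; field_simp
    _ ≤ m ^ m * n ^ n * (x + y) ^ (m + n) := by
        rw [← hpow, ← hmean]; gcongr

theorem choose_mul_pow_mul_pow_le {m n : ℕ} (hm : m ≠ 0) (hn : n ≠ 0) {x y : ℝ} (hx : 0 ≤ x)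
    (hy : 0 ≤ y) :
    ((m + n).choose m : ℝ) * x ^ m * y ^ n ≤ ((√m)⁻¹ + (√n)⁻¹) * (x + y) ^ (m + n) := by
  have hm' : 0 < √m := by positivity
  have hn' : 0 < √n := by positivity
  have hsqrt : √(m + n) ≤ √m + √n := by
    rw [Real.sqrt_le_iff]
    refine ⟨by positivity, ?_⟩
    nlinarith [Real.sq_sqrt (Nat.cast_nonneg (α := ℝ) m), Real.sq_sqrt (Nat.cast_nonneg (α := ℝ) n)]
  refine le_of_mul_le_mul_right ?_ (by positivity : 0 < √(m * n) * ((m : ℝ) + n) ^ (m + n))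
  calc ((m + n).choose m : ℝ) * x ^ m * y ^ n * (√(m * n) * ((m : ℝ) + n) ^ (m + n))
      = (m + n).choose m * √(m * n) * (((m : ℝ) + n) ^ (m + n) * (x ^ m * y ^ n)) := by ring
    _ ≤ (m + n).choose m * √(m * n) * (m ^ m * n ^ n * (x + y) ^ (m + n)) :=
        mul_le_mul_of_nonneg_left (add_pow_add_mul_pow_mul_pow_le m n hx hy) (by positivity)
    _ = (m + n).choose m * m ^ m * n ^ n * √(m * n) * (x + y) ^ (m + n) := by ring
    _ ≤ √(m + n) * (m + n) ^ (m + n) * (x + y) ^ (m + n) :=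
        mul_le_mul_of_nonneg_right (choose_mul_pow_mul_pow_mul_sqrt_le m n) (by positivity)
    _ ≤ (√m + √n) * (m + n) ^ (m + n) * (x + y) ^ (m + n) := by gcongr
    _ = ((√m)⁻¹ + (√n)⁻¹) * (x + y) ^ (m + n) * (√(m * n) * ((m : ℝ) + n) ^ (m + n)) := by
        rw [Real.sqrt_mul (Nat.cast_nonneg m)]; field_simp; ring

theorem choose_mul_pow_mul_pow_succ_le {m n : ℕ} {x y : ℝ} (hx : 0 ≤ x) (hy : 0 ≤ y) :
    ((m + n + 1).choose m : ℝ) * x ^ m * y ^ (n + 1) ≤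
      (2 * (√(m + 1))⁻¹ + (√(n + 1))⁻¹) * (x + y) ^ (m + n + 1) := by
  rcases eq_or_ne m 0 with rfl | hm
  · have hpow : y ^ (n + 1) ≤ (x + y) ^ (n + 1) := pow_le_pow_left₀ hy (by linarith) _
    have hcoef : (1 : ℝ) ≤ 2 * (√(0 + 1))⁻¹ + (√(n + 1))⁻¹ := by
      norm_num; linarith [inv_nonneg.mpr (Real.sqrt_nonneg (n + 1))]
    simpa using mul_le_mul hcoef hpow (by positivity) (by positivity)
  have hsqrt : √(m + 1) ≤ 2 * √m := by
    rw [Real.sqrt_le_iff, mul_pow, Real.sq_sqrt (Nat.cast_nonneg m)]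
    have : (1 : ℝ) ≤ m := by exact_mod_cast Nat.one_le_iff_ne_zero.mpr hm
    constructor <;> [positivity; linarith]
  have hinv : (√m)⁻¹ ≤ 2 * (√(m + 1))⁻¹ := by
    rw [← div_eq_mul_inv, inv_eq_one_div, div_le_div_iff₀ (by positivity) (by positivity)]
    linarith
  calc ((m + n + 1).choose m : ℝ) * x ^ m * y ^ (n + 1)
      ≤ ((√m)⁻¹ + (√(n + 1 : ℕ))⁻¹) * (x + y) ^ (m + n + 1) :=
        choose_mul_pow_mul_pow_le hm n.succ_ne_zero hx hy
    _ ≤ (2 * (√(m + 1))⁻¹ + (√(n + 1))⁻¹) * (x + y) ^ (m + n + 1) := by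
        push_cast; gcongr

theorem mul_choose_succ_mul_pow_mul_pow_le (m k : ℕ) {x y : ℝ} (hx : 0 ≤ x) (hy : k + 1 ≤ y) :
    ((m : ℝ) + 1) * (k + 1) * ((m + k + 2).choose (m + 1) * x ^ m * y ^ k) ≤
      (m + k + 2) * ((m + k + 1).choose m * x ^ m * y ^ (k + 1)) := by
  have hchoose :
      ((m : ℝ) + 1) * (m + k + 2).choose (m + 1) = (m + k + 2) * (m + k + 1).choose m := by
    rw [mul_comm]; exact_mod_cast (Nat.add_one_mul_choose_eq (m + k + 1) m).symm
  have hypow : ((k : ℝ) + 1) * y ^ k ≤ y ^ (k + 1) := by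
    rw [_root_.pow_succ']
    exact mul_le_mul_of_nonneg_right hy (pow_nonneg (by linarith) k)
  calc ((m : ℝ) + 1) * (k + 1) * ((m + k + 2).choose (m + 1) * x ^ m * y ^ k)
      = (m + k + 2) * ((m + k + 1).choose m * x ^ m * ((k + 1) * y ^ k)) := by
        linear_combination ((k : ℝ) + 1) * x ^ m * y ^ k * hchoose
    _ ≤ (m + k + 2) * ((m + k + 1).choose m * x ^ m * y ^ (k + 1)) := by gcongr

theorem choose_mul_pow_mul_pow_le_of_mem_Ioo {t j : ℕ} (hj : j ∈ Ioo 0 t) {x y : ℝ} (hx : 0 ≤ x)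
    (hy : ((t - j : ℕ) : ℝ) ≤ y) :
    (t.choose j : ℝ) * x ^ (j - 1) * y ^ (t - j - 1) ≤
      4 * ((√(j : ℝ))⁻¹ ^ 3 + (√((t - j : ℕ) : ℝ))⁻¹ ^ 3) * (x + y) ^ (t - 1) := by
  rw [mem_Ioo] at hj
  obtain ⟨m, rfl⟩ : ∃ m, j = m + 1 := ⟨j - 1, by omega⟩
  obtain ⟨k, rfl⟩ : ∃ k, t = m + k + 2 := ⟨t - m - 2, by omega⟩
  rw [show m + k + 2 - (m + 1) = k + 1 by omega] at hy ⊢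
  rw [show m + 1 - 1 = m by omega, show k + 1 - 1 = k by omega,
    show m + k + 2 - 1 = m + k + 1 by omega]
  push_cast at hy ⊢
  set a := (√((m : ℝ) + 1))⁻¹
  set b := (√((k : ℝ) + 1))⁻¹
  have ha : 0 ≤ a := by positivity
  have hb : 0 ≤ b := by positivity
  have ha2 : a ^ 2 * (m + 1) = 1 := by
    rw [inv_pow, Real.sq_sqrt (by positivity), inv_mul_cancel₀ (by positivity)]
  have hb2 : b ^ 2 * (k + 1) = 1 := by
    rw [inv_pow, Real.sq_sqrt (by positivity), inv_mul_cancel₀ (by positivity)]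
  have hcubic : (a ^ 2 + b ^ 2) * (2 * a + b) ≤ 4 * (a ^ 3 + b ^ 3) := by
    nlinarith [mul_nonneg (sq_nonneg (a - b)) (by positivity : 0 ≤ 2 * a + 3 * b),
      mul_nonneg (mul_nonneg ha hb) hb]
  refine le_of_mul_le_mul_left ?_ (by positivity : (0 : ℝ) < (m + 1) * (k + 1))
  calc ((m : ℝ) + 1) * (k + 1) * ((m + k + 2).choose (m + 1) * x ^ m * y ^ k)
      ≤ (m + k + 2) * ((m + k + 1).choose m * x ^ m * y ^ (k + 1)) :=
        mul_choose_succ_mul_pow_mul_pow_le m k hx hy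
    _ ≤ (m + k + 2) * ((2 * a + b) * (x + y) ^ (m + k + 1)) :=
        mul_le_mul_of_nonneg_left (choose_mul_pow_mul_pow_succ_le hx (by linarith)) (by positivity)
    _ = (m + 1) * (k + 1) * ((a ^ 2 + b ^ 2) * (2 * a + b) * (x + y) ^ (m + k + 1)) := by
        linear_combination -(2 * a + b) * (x + y) ^ (m + k + 1) * ((k + 1) * ha2 + (m + 1) * hb2)
    _ ≤ (m + 1) * (k + 1) * (4 * (a ^ 3 + b ^ 3) * (x + y) ^ (m + k + 1)) := by
        have : 0 ≤ x + y := by linarith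
        gcongr

theorem inv_sqrt_add_one_pow_three_le {x : ℝ} (hx : 0 < x) :
    (√(x + 1))⁻¹ ^ 3 ≤ 2 * ((√x)⁻¹ - (√(x + 1))⁻¹) := by
  have hs : 0 < √x := Real.sqrt_pos.mpr hx
  have hsr : √x ≤ √(x + 1) := Real.sqrt_le_sqrt (by linarith)
  have hs2 := Real.sq_sqrt hx.le
  have hr2 := Real.sq_sqrt (by linarith : 0 ≤ x + 1)
  set s := √x
  set r := √(x + 1)
  have hr : 0 < r := hs.trans_le hsr
  rw [inv_pow, ← one_div, ← one_div, ← one_div, div_le_iff₀ (by positivity)]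
  field_simp
  nlinarith [mul_le_mul_of_nonneg_left hsr hs.le]

theorem sum_Ioc_inv_sqrt_pow_three_le (N : ℕ) : ∑ i ∈ Ioc 0 N, (√(i : ℝ))⁻¹ ^ 3 ≤ 3 := by
  have htel : ∀ N : ℕ, ∑ i ∈ Ioc 0 (N + 1), (√(i : ℝ))⁻¹ ^ 3 + 2 * (√((N : ℝ) + 1))⁻¹ ≤ 3 := by
    intro N
    induction N with
    | zero => norm_num
    | succ N ih =>
      rw [sum_Ioc_succ_top (Nat.zero_le _)]
      have := inv_sqrt_add_one_pow_three_le (x := (N : ℝ) + 1) (by positivity)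
      push_cast at ih ⊢
      linarith
  rcases N with _ | N
  · simp
  · linarith [htel N, (by positivity : 0 ≤ 2 * (√((N : ℝ) + 1))⁻¹)]

theorem sum_Ioo_zero_add_reflect {M : Type*} [AddCommMonoid M] (f : ℕ → M) (t : ℕ) :
    ∑ j ∈ Ioo 0 t, (f j + f (t - j)) = ∑ j ∈ Ioo 0 t, f j + ∑ j ∈ Ioo 0 t, f j := by
  rw [sum_add_distrib, ← Ico_add_one_left_eq_Ioo, sum_Ico_reflect _ _ (by omega),
    Nat.add_sub_cancel_left, zero_add, Nat.add_sub_cancel]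

theorem sum_Ioo_inv_sqrt_pow_three_add_reflect_le (t : ℕ) :
    ∑ j ∈ Ioo 0 t, ((√(j : ℝ))⁻¹ ^ 3 + (√((t - j : ℕ) : ℝ))⁻¹ ^ 3) ≤ 6 := by
  have hIoo : ∑ j ∈ Ioo 0 t, (√(j : ℝ))⁻¹ ^ 3 ≤ ∑ j ∈ Ioc 0 t, (√(j : ℝ))⁻¹ ^ 3 :=
    sum_le_sum_of_subset_of_nonneg Ioo_subset_Ioc_self fun _ _ _ => by positivity
  rw [sum_Ioo_zero_add_reflect (fun j => (√(j : ℝ))⁻¹ ^ 3)]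
  linarith [sum_Ioc_inv_sqrt_pow_three_le t]

theorem stmt11_general (t : ℕ) (a b : ℝ) (hb : 0 ≤ b) (htab : 0 < t + a + b) :
    ∑ j ∈ (Finset.Ioo 0 t).filter (fun j : ℕ => 0 < (j : ℝ) + a),
        (t.choose j : ℝ) * (a + (j : ℝ)) ^ (j - 1) * (b + (t : ℝ) - (j : ℝ)) ^ (t - j - 1) ≤
      Real.exp 4 * ((t : ℝ) + a + b) ^ (t - 1) := by
  set w : ℕ → ℝ := fun j => 4 * ((√(j : ℝ))⁻¹ ^ 3 + (√((t - j : ℕ) : ℝ))⁻¹ ^ 3)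
  have hterm : ∀ j ∈ (Ioo 0 t).filter (fun j : ℕ => 0 < (j : ℝ) + a),
      (t.choose j : ℝ) * (a + j) ^ (j - 1) * (b + t - j) ^ (t - j - 1) ≤
        w j * (t + a + b) ^ (t - 1) := by
    intro j hj
    obtain ⟨hj, hja⟩ := mem_filter.mp hj
    have h := choose_mul_pow_mul_pow_le_of_mem_Ioo hj (x := a + j) (y := b + t - j)
      (by linarith) (by push_cast [(mem_Ioo.mp hj).2.le]; linarith)
    rwa [show a + j + (b + t - j) = t + a + b by ring] at h
  have hexp : (24 : ℝ) ≤ exp 4 := by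
    calc (24 : ℝ) ≤ 2.7 ^ 4 := by norm_num
      _ ≤ exp 1 ^ 4 := by gcongr; linarith [exp_one_gt_d9]
      _ = exp 4 := by rw [← Real.exp_nat_mul]; norm_num
  calc _ ≤ ∑ j ∈ (Ioo 0 t).filter (fun j : ℕ => 0 < (j : ℝ) + a), w j * (t + a + b) ^ (t - 1) :=
        sum_le_sum hterm
    _ ≤ ∑ j ∈ Ioo 0 t, w j * (t + a + b) ^ (t - 1) :=
        sum_le_sum_of_subset_of_nonneg (filter_subset _ _) fun _ _ _ => by positivity
    _ = 4 * (∑ j ∈ Ioo 0 t, ((√(j : ℝ))⁻¹ ^ 3 + (√((t - j : ℕ) : ℝ))⁻¹ ^ 3)) *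
          (t + a + b) ^ (t - 1) := by
        rw [← sum_mul, ← mul_sum]
    _ ≤ exp 4 * (t + a + b) ^ (t - 1) := by
        gcongr; linarith [sum_Ioo_inv_sqrt_pow_three_add_reflect_le t]

theorem stmt11 (t : ℕ) (ht : 2 ≤ t) (a b : ℝ) (hb : 0 ≤ b) (htab : 0 < t + a + b) :
    ∑ j ∈ (Finset.Ioo 0 t).filter (fun j : ℕ => 0 < (j : ℝ) + a),
        (t.choose j : ℝ) * (a + (j : ℝ)) ^ (j - 1) * (b + (t : ℝ) - (j : ℝ)) ^ (t - j - 1) ≤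
      Real.exp 4 * ((t : ℝ) + a + b) ^ (t - 1) :=
  stmt11_general t a b hb htab
end

section
/- Let A(x) be the number of positive integers n ≤ x expressible as n = m_1·m_2 with m_1 ≤ √x and m_2 ≤ √x, and H(x, y, z) the number of n ≤ x having a divisor in (y, z]. Then H(x/4, √x/4, √x/2) ≤ A(x) ≤ Σ_{k ≥ 0} H(x/2^k, √x/2^{k+1}, √x/2^k). -/
open Real

/-- `Hcount x y z` is the number of integers `n ≤ x` with a divisor in `(y, z]`. -/
noncomputable def Hcount (x y z : ℝ) : ℕ :=
  Set.ncard {n : ℕ | 1 ≤ n ∧ (n : ℝ) ≤ x ∧ ∃ d : ℕ, d ∣ n ∧ y < (d : ℝ) ∧ (d : ℝ) ≤ z}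

/-- `Acount x` is the number of integers `n ≤ x` expressible as `m₁ m₂` with
`m₁, m₂ ≤ √x`. -/
noncomputable def Acount (x : ℝ) : ℕ :=
  Set.ncard {n : ℕ | 1 ≤ n ∧ (n : ℝ) ≤ x ∧ ∃ m₁ m₂ : ℕ, n = m₁ * m₂ ∧
    (m₁ : ℝ) ≤ Real.sqrt x ∧ (m₂ : ℝ) ≤ Real.sqrt x}

lemma setFinite (x : ℝ) (P : ℕ → Prop) :
    {n : ℕ | 1 ≤ n ∧ (n : ℝ) ≤ x ∧ P n}.Finite := by
  apply (Set.finite_Iic ⌊x⌋₊).subset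
  intro n hn
  exact Nat.le_floor hn.2.1

lemma count_eq_ncard {s : Set ℕ} (hs : s.Finite) :
    MeasureTheory.Measure.count s = s.ncard := by
  rw [MeasureTheory.Measure.count_apply_finite s hs, Set.ncard_eq_toFinset_card s hs]

/-- key lemma for the upper bound -/
lemma exists_k (x : ℝ) (hx : 1 ≤ x) (n a b : ℕ) (hn1 : 1 ≤ n)
    (hab : n = a * b) (hle : a ≤ b) (hb : (b : ℝ) ≤ Real.sqrt x) :
    ∃ k : ℕ, (n : ℝ) ≤ x / 2 ^ k ∧ ∃ d : ℕ, d ∣ n ∧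
      Real.sqrt x / 2 ^ (k + 1) < (d : ℝ) ∧ (d : ℝ) ≤ Real.sqrt x / 2 ^ k := by
  have hx0 : (0 : ℝ) ≤ x := by linarith
  have hL : 1 ≤ Real.sqrt x := by
    rw [show (1 : ℝ) = Real.sqrt 1 by simp]; exact Real.sqrt_le_sqrt hx
  have hLL : Real.sqrt x * Real.sqrt x = x := Real.mul_self_sqrt hx0
  have hb0 : 0 < b := by
    rcases Nat.eq_zero_or_pos b with h | h
    · subst h; simp at hab; omega
    · exact h
  have hb0' : (0 : ℝ) < b := by exact_mod_cast hb0
  have hq1 : 1 ≤ Real.sqrt x / b := by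
    rw [le_div_iff₀ hb0']; linarith
  set t := ⌊Real.sqrt x / (b : ℝ)⌋₊ with ht
  have ht1 : 1 ≤ t := Nat.le_floor (by exact_mod_cast hq1)
  set k := Nat.log 2 t with hk
  have h2k : (2 : ℕ) ^ k ≤ t := Nat.pow_log_le_self 2 (by omega)
  have h2k' : t < 2 ^ (k + 1) := Nat.lt_pow_succ_log_self (by norm_num) t
  have hpow : (0 : ℝ) < (2 : ℝ) ^ k := by positivity
  have hpow1 : (1 : ℝ) ≤ (2 : ℝ) ^ k := one_le_pow₀ (by norm_num)
  have hfl : (t : ℝ) ≤ Real.sqrt x / b := Nat.floor_le (by positivity)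
  have hfl' : Real.sqrt x / b < t + 1 := Nat.lt_floor_add_one _
  have hbk : (b : ℝ) ≤ Real.sqrt x / 2 ^ k := by
    have h : ((2 : ℕ) ^ k : ℝ) ≤ Real.sqrt x / b := le_trans (by exact_mod_cast h2k) hfl
    rw [le_div_iff₀ hb0'] at h
    rw [le_div_iff₀ hpow]
    push_cast at h
    nlinarith
  have hbk' : Real.sqrt x / 2 ^ (k + 1) < (b : ℝ) := by
    have h1 : Real.sqrt x / b < 2 ^ (k + 1) := by
      have : ((t : ℝ) + 1) ≤ 2 ^ (k + 1) := by exact_mod_cast h2k'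
      linarith
    rw [div_lt_iff₀ hb0'] at h1
    rw [div_lt_iff₀ (by positivity : (0:ℝ) < (2:ℝ) ^ (k+1))]
    linarith
  refine ⟨k, ?_, b, hab ▸ dvd_mul_left b a, hbk', hbk⟩
  have ha : (a : ℝ) ≤ (b : ℝ) := by exact_mod_cast hle
  have hnab : (n : ℝ) = a * b := by exact_mod_cast hab
  have h1 : (n : ℝ) ≤ (Real.sqrt x / 2 ^ k) * (Real.sqrt x / 2 ^ k) := by
    rw [hnab]
    have ha' : (0 : ℝ) ≤ (a : ℝ) := by positivity
    calc (a : ℝ) * b ≤ b * b := by nlinarith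
    _ ≤ (Real.sqrt x / 2 ^ k) * (Real.sqrt x / 2 ^ k) := by
        apply mul_le_mul hbk hbk (le_of_lt hb0') (by positivity)
  have h2 : (Real.sqrt x / 2 ^ k) * (Real.sqrt x / 2 ^ k) = x / (2 ^ k * 2 ^ k) := by
    rw [div_mul_div_comm, hLL]
  have h3 : x / ((2:ℝ) ^ k * 2 ^ k) ≤ x / 2 ^ k := by
    apply div_le_div_of_nonneg_left hx0 hpow
    nlinarith
  linarith [h1, h2 ▸ h1]

theorem stmt19 (x : ℝ) (hx : 1 ≤ x) :
    Hcount (x / 4) (Real.sqrt x / 4) (Real.sqrt x / 2) ≤ Acount x ∧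
    (Acount x : ENNReal) ≤
      ∑' k : ℕ, (Hcount (x / 2 ^ k) (Real.sqrt x / 2 ^ (k + 1)) (Real.sqrt x / 2 ^ k) :
        ENNReal) := by
  have hx0 : (0 : ℝ) ≤ x := by linarith
  have hL : 1 ≤ Real.sqrt x := by
    rw [show (1 : ℝ) = Real.sqrt 1 by simp]; exact Real.sqrt_le_sqrt hx
  have hLL : Real.sqrt x * Real.sqrt x = x := Real.mul_self_sqrt hx0
  constructor
  · apply Set.ncard_le_ncard _ (setFinite x _)
    rintro n ⟨h1, h2, d, hd, hd1, hd2⟩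
    have hd0 : (0 : ℝ) < d := by linarith
    have hd0' : 0 < d := by exact_mod_cast hd0
    refine ⟨h1, by linarith, d, n / d, (Nat.mul_div_cancel' hd).symm, by linarith, ?_⟩
    have hcast : ((n / d : ℕ) : ℝ) ≤ (n : ℝ) / d := Nat.cast_div_le
    have : (n : ℝ) / d ≤ Real.sqrt x := by
      rw [div_le_iff₀ hd0]
      nlinarith
    linarith
  · have hsub : {n : ℕ | 1 ≤ n ∧ (n : ℝ) ≤ x ∧ ∃ m₁ m₂ : ℕ, n = m₁ * m₂ ∧
        (m₁ : ℝ) ≤ Real.sqrt x ∧ (m₂ : ℝ) ≤ Real.sqrt x} ⊆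
        ⋃ k : ℕ, {n : ℕ | 1 ≤ n ∧ (n : ℝ) ≤ x / 2 ^ k ∧ ∃ d : ℕ, d ∣ n ∧
          Real.sqrt x / 2 ^ (k + 1) < (d : ℝ) ∧ (d : ℝ) ≤ Real.sqrt x / 2 ^ k} := by
      rintro n ⟨h1, h2, m₁, m₂, hab, hm1, hm2⟩
      rcases le_total m₁ m₂ with h | h
      · obtain ⟨k, hk1, hk2⟩ := exists_k x hx n m₁ m₂ h1 hab h hm2
        exact Set.mem_iUnion.mpr ⟨k, h1, hk1, hk2⟩
      · obtain ⟨k, hk1, hk2⟩ := exists_k x hx n m₂ m₁ h1 (by rw [hab]; ring) h hm1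
        exact Set.mem_iUnion.mpr ⟨k, h1, hk1, hk2⟩
    calc (Acount x : ENNReal)
        = MeasureTheory.Measure.count {n : ℕ | 1 ≤ n ∧ (n : ℝ) ≤ x ∧ ∃ m₁ m₂ : ℕ,
            n = m₁ * m₂ ∧ (m₁ : ℝ) ≤ Real.sqrt x ∧ (m₂ : ℝ) ≤ Real.sqrt x} :=
          (count_eq_ncard (setFinite x _)).symm
      _ ≤ MeasureTheory.Measure.count (⋃ k : ℕ, {n : ℕ | 1 ≤ n ∧ (n : ℝ) ≤ x / 2 ^ k ∧
            ∃ d : ℕ, d ∣ n ∧ Real.sqrt x / 2 ^ (k + 1) < (d : ℝ) ∧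
              (d : ℝ) ≤ Real.sqrt x / 2 ^ k}) := MeasureTheory.measure_mono hsub
      _ ≤ ∑' k : ℕ, MeasureTheory.Measure.count {n : ℕ | 1 ≤ n ∧ (n : ℝ) ≤ x / 2 ^ k ∧
            ∃ d : ℕ, d ∣ n ∧ Real.sqrt x / 2 ^ (k + 1) < (d : ℝ) ∧
              (d : ℝ) ≤ Real.sqrt x / 2 ^ k} := MeasureTheory.measure_iUnion_le _
      _ = ∑' k : ℕ, (Hcount (x / 2 ^ k) (Real.sqrt x / 2 ^ (k + 1))
            (Real.sqrt x / 2 ^ k) : ENNReal) := by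
          refine tsum_congr fun k => ?_
          rw [count_eq_ncard (setFinite _ _)]
          rfl
end
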